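/- (Closed double-sum formula for Bell numbers, equation (Bell_closed)) For every natural number m, B_m = ∑_{j=0}^{m} ( j^m / j! ) · ∑_{k=0}^{m−j} (−1)^k / k!, an identity of rational numbers (with the convention 0^0 = 1). -/

import Mathlib

/-!
Splitting off the block that contains a fixed point gives `B (m + 1) = ∑ i ≤ m, C(m, i) B i`.
The double sum truncated at `N` instead of `m`, `dobinskiPartialSum m N`, is the degree-`N`
truncation of the Cauchy product of `∑ jᵐ xʲ / j!` with `e⁻ˣ`, i.e. `∑ n ≤ N, Δⁿ(xᵐ)(0) / n!`;
since `Δⁿ(xᵐ) = 0` for `n > m`, it does not depend on `N ≥ m`. Shifting `j ↦ j + 1` and expanding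
`(j + 1)ᵐ` shows that it satisfies the same recurrence as `B`.
-/

/-- The Bell number `B_m`: the number of partitions of an `m`-element set. -/
def bellNumber (m : ℕ) : ℕ :=
  Fintype.card (Finpartition (Finset.univ : Finset (Fin m)))

open Finset

namespace Finpartition

variable {α : Type*} [DecidableEq α]

lemma avoid_parts_of_mem {s t : Finset α} (P : Finpartition s) (ht : t ∈ P.parts) :
    (P.avoid t).parts = P.parts.erase t := by
  ext c
  rw [mem_avoid, mem_erase]
  constructor
  · rintro ⟨d, hd, hdt, rfl⟩
    have hne : d ≠ t := fun h ↦ hdt h.le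
    have hdisj : Disjoint d t := P.disjoint hd ht hne
    rw [sdiff_eq_self_of_disjoint hdisj]
    exact ⟨hne, hd⟩
  · rintro ⟨hne, hc⟩
    have hdisj : Disjoint c t := P.disjoint hc ht hne
    exact ⟨c, hc, fun hle ↦ P.ne_bot hc (disjoint_self.1 (hdisj.mono_right hle)),
      sdiff_eq_self_of_disjoint hdisj⟩

lemma card_filter_part_eq {s t : Finset α} {a : α} (hts : t ⊆ s) (hat : a ∈ t) :
    #{P : Finpartition s | P.part a = t} = Fintype.card (Finpartition (s \ t)) := by
  have ht : t ≠ ⊥ := ne_empty_of_mem hat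
  have hsup : (s \ t) ⊔ t = s := sdiff_union_of_subset hts
  rw [← card_univ]
  refine card_bij' (fun P _ ↦ P.avoid t) (fun Q _ ↦ Q.extend ht sdiff_disjoint hsup)
    (fun _ _ ↦ mem_univ _) (fun Q _ ↦ ?_) (fun P hP ↦ ?_) (fun Q _ ↦ ?_)
  · exact mem_filter.2 ⟨mem_univ _, part_eq_of_mem _ (mem_insert_self t _) hat⟩
  · have htP : t ∈ P.parts := (mem_filter.1 hP).2 ▸ P.part_mem.2 (hts hat)
    ext1
    rw [extend_parts, avoid_parts_of_mem P htP, insert_erase htP]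
  · have htQ : t ∉ Q.parts := fun h ↦ (mem_sdiff.1 (Q.le h hat)).2 hat
    ext1
    rw [avoid_parts_of_mem _ (mem_insert_self t _), extend_parts, erase_insert htQ]

lemma card_insert {s : Finset α} {a : α} (ha : a ∉ s) :
    Fintype.card (Finpartition (insert a s))
      = ∑ u ∈ s.powerset, Fintype.card (Finpartition (s \ u)) := by
  have hmaps : Set.MapsTo (fun P : Finpartition (insert a s) ↦ (P.part a).erase a)
      ↑(univ : Finset (Finpartition (insert a s))) ↑s.powerset := fun P _ ↦
    mem_coe.2 <| mem_powerset.2 <| by simpa [ha] using erase_subset_erase a (P.part_subset a)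
  rw [← card_univ, card_eq_sum_card_fiberwise hmaps]
  refine sum_congr rfl fun u hu ↦ ?_
  have hau : a ∉ u := fun h ↦ ha (mem_powerset.1 hu h)
  have hfiber (P : Finpartition (insert a s)) : (P.part a).erase a = u ↔ P.part a = insert a u :=
    erase_eq_iff_eq_insert (P.mem_part_self.2 (mem_insert_self a s)) hau
  simp only [hfiber]
  rw [card_filter_part_eq (insert_subset_insert a (mem_powerset.1 hu)) (mem_insert_self a u),
    insert_sdiff_insert, sdiff_insert_of_notMem ha]

lemma card_eq_bell (s : Finset α) : Fintype.card (Finpartition s) = (#s).bell := by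
  obtain ⟨n, hn⟩ : ∃ n, #s = n := ⟨_, rfl⟩
  induction n using Nat.strong_induction_on generalizing s with
  | _ n ih =>
    cases n with
    | zero =>
      obtain rfl := card_eq_zero.1 hn
      rw [card_empty, Nat.bell_zero]
      exact Fintype.card_unique (α := Finpartition (⊥ : Finset α))
    | succ n =>
      obtain ⟨a, s, ha, rfl, rfl⟩ := card_eq_succ.1 hn
      rw [card_insert ha, Finset.card_insert_of_notMem ha, Nat.bell_succ, ← Nat.range_succ_eq_Iic]
      calc ∑ u ∈ s.powerset, Fintype.card (Finpartition (s \ u))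
          = ∑ u ∈ s.powerset, (#s - #u).bell := sum_congr rfl fun u hu ↦ by
            rw [ih _ ((card_le_card sdiff_subset).trans_lt (Nat.lt_succ_self _)) _ rfl,
              card_sdiff_of_subset (mem_powerset.1 hu)]
        _ = _ := by simp [sum_powerset_apply_card fun k ↦ (#s - k).bell]

end Finpartition

lemma bellNumber_eq_bell (m : ℕ) : bellNumber m = m.bell := by
  rw [bellNumber, Finpartition.card_eq_bell, card_univ, Fintype.card_fin]

lemma Nat.bell_succ_eq_sum_choose_mul_bell (n : ℕ) :
    (n + 1).bell = ∑ i ∈ range (n + 1), n.choose i * i.bell := by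
  rw [Nat.bell_succ, ← Nat.range_succ_eq_Iic, ← sum_range_reflect]
  refine sum_congr rfl fun i hi ↦ ?_
  have hi : i ≤ n := Nat.lt_succ_iff.mp (mem_range.mp hi)
  rw [Nat.add_sub_cancel, Nat.choose_symm hi, Nat.sub_sub_self hi]

def dobinskiPartialSum (m N : ℕ) : ℚ :=
  ∑ j ∈ range (N + 1),
    ((j : ℚ) ^ m / j.factorial) * ∑ k ∈ range (N - j + 1), (-1 : ℚ) ^ k / k.factorial

lemma fwdDiff_iter_pow_zero_div_factorial (m n : ℕ) :
    (fwdDiff 1)^[n] (fun x : ℚ ↦ x ^ m) 0 / n.factorial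
      = ∑ j ∈ range (n + 1), (j : ℚ) ^ m / j.factorial * ((-1) ^ (n - j) / (n - j).factorial) := by
  rw [fwdDiff_iter_eq_sum_shift, sum_div]
  refine sum_congr rfl fun j hj ↦ ?_
  simp only [zero_add, nsmul_one, zsmul_eq_mul]
  push_cast
  rw [Nat.cast_choose ℚ (Nat.lt_succ_iff.mp (mem_range.mp hj))]
  field_simp

lemma dobinskiPartialSum_eq_sum_fwdDiff (m N : ℕ) :
    dobinskiPartialSum m N
      = ∑ n ∈ range (N + 1), (fwdDiff 1)^[n] (fun x : ℚ ↦ x ^ m) 0 / n.factorial := by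
  simp_rw [dobinskiPartialSum, fwdDiff_iter_pow_zero_div_factorial]
  rw [sum_range_diag_flip (N + 1) fun j k ↦ (j : ℚ) ^ m / j.factorial * ((-1) ^ k / k.factorial)]
  simp_rw [mul_sum]
  refine sum_congr rfl fun j hj ↦ ?_
  rw [Nat.sub_add_comm (Nat.lt_succ_iff.mp (mem_range.mp hj))]

lemma dobinskiPartialSum_eq_of_le {m N : ℕ} (h : m ≤ N) :
    dobinskiPartialSum m N = dobinskiPartialSum m m := by
  simp_rw [dobinskiPartialSum_eq_sum_fwdDiff]
  refine eventually_constant_sum (fun n hn ↦ ?_) (by omega)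
  rw [fwdDiff_iter_pow_eq_zero_of_lt hn, Pi.zero_apply, zero_div]

lemma dobinskiPartialSum_succ_succ (m N : ℕ) :
    dobinskiPartialSum (m + 1) (N + 1)
      = ∑ i ∈ range (m + 1), (m.choose i : ℚ) * dobinskiPartialSum i N := by
  have shift (j : ℕ) : ((j + 1 : ℕ) : ℚ) ^ (m + 1) / (j + 1).factorial
      = ∑ i ∈ range (m + 1), (m.choose i : ℚ) * ((j : ℚ) ^ i / j.factorial) :=
    calc ((j + 1 : ℕ) : ℚ) ^ (m + 1) / (j + 1).factorial = ((j : ℚ) + 1) ^ m / j.factorial := by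
          push_cast [Nat.factorial_succ]
          field_simp
          ring
      _ = _ := by simp only [add_pow, one_pow, mul_one, sum_div, mul_div_assoc', mul_comm]
  rw [dobinskiPartialSum, sum_range_succ']
  simp only [shift, Nat.cast_zero, zero_pow m.succ_ne_zero, zero_div, zero_mul, add_zero,
    Nat.add_sub_add_right, sum_mul]
  rw [sum_comm]
  simp only [dobinskiPartialSum, mul_sum, mul_assoc]

lemma bell_eq_dobinskiPartialSum (m : ℕ) : (m.bell : ℚ) = dobinskiPartialSum m m := by
  induction m using Nat.strong_induction_on with
  | _ m ih =>
    cases m with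
    | zero => simp [dobinskiPartialSum]
    | succ m =>
      rw [Nat.bell_succ_eq_sum_choose_mul_bell, dobinskiPartialSum_succ_succ]
      push_cast
      refine sum_congr rfl fun i hi ↦ ?_
      have hi : i ≤ m := Nat.lt_succ_iff.mp (mem_range.mp hi)
      rw [ih i (Nat.lt_succ_of_le hi), dobinskiPartialSum_eq_of_le hi]

/-- closed double-sum formula for Bell numbers, equation (Bell_closed):
`B_m = ∑_{j=0}^{m} (j^m / j!) · ∑_{k=0}^{m−j} (−1)^k / k!`, as rational numbers
(with the convention `0^0 = 1`). -/
theorem bell_closed_double_sum (m : ℕ) :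
    (bellNumber m : ℚ)
      = ∑ j ∈ Finset.range (m + 1),
          ((j : ℚ) ^ m / j.factorial)
            * ∑ k ∈ Finset.range (m - j + 1), (-1 : ℚ) ^ k / k.factorial := by
  rw [bellNumber_eq_bell, bell_eq_dobinskiPartialSum, dobinskiPartialSum]
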